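/- For β ∈ (0,1/3) and c > 1, there exists a unique k > 0 such that m_β(k) = c. -/

import Mathlib

open Real Set

private lemma nonneg_of_deriv_nonneg' {f f' : ℝ → ℝ}
    (hd : ∀ x, HasDerivAt f (f' x) x) (h0 : f 0 = 0)
    (hf' : ∀ x, 0 ≤ x → 0 ≤ f' x) : ∀ x, 0 ≤ x → 0 ≤ f x := by
  intro x hx
  have hmono : MonotoneOn f (Ici (0:ℝ)) :=
    monotoneOn_of_deriv_nonneg (convex_Ici 0)
      (fun y _ => (hd y).continuousAt.continuousWithinAt)
      (fun y _ => (hd y).differentiableAt.differentiableWithinAt)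
      (fun y hy => by
        rw [(hd y).deriv]
        exact hf' y (le_of_lt (by simpa [interior_Ici] using hy)))
  have h := hmono (self_mem_Ici) (show x ∈ Ici (0:ℝ) from hx) hx
  linarith [h0 ▸ h]

private lemma aux_P3 : ∀ x : ℝ, 0 ≤ x →
    0 ≤ x * (Real.cosh x ^ 2 + Real.sinh x ^ 2) - Real.sinh x * Real.cosh x := by
  apply nonneg_of_deriv_nonneg' (f' := fun x => 4 * x * Real.sinh x * Real.cosh x)
  · intro x
    have hs := Real.hasDerivAt_sinh x
    have hc := Real.hasDerivAt_cosh x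
    have h := ((hasDerivAt_id' (x := x)).mul ((hc.pow 2).add (hs.pow 2))).sub (hs.mul hc)
    convert h using 1 <;> try rfl
    norm_num
    try ring
  · simp
  · intro x hx
    have h1 := Real.sinh_nonneg_iff.mpr hx
    have h2 := Real.cosh_pos x
    positivity

private lemma aux_P2 : ∀ x : ℝ, 0 ≤ x →
    0 ≤ 4 * x * Real.sinh x * Real.cosh x + 2 - 2 * (Real.cosh x ^ 2 + Real.sinh x ^ 2) := by
  apply nonneg_of_deriv_nonneg'
    (f' := fun x => 4 * (x * (Real.cosh x ^ 2 + Real.sinh x ^ 2) - Real.sinh x * Real.cosh x))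
  · intro x
    have hs := Real.hasDerivAt_sinh x
    have hc := Real.hasDerivAt_cosh x
    have h := (((((hasDerivAt_id' (x := x)).const_mul 4).mul hs).mul hc).add
      (hasDerivAt_const x 2)).sub (((hc.pow 2).add (hs.pow 2)).const_mul 2)
    convert h using 1 <;> try rfl
    norm_num
    try ring
  · simp
  · intro x hx
    have := aux_P3 x hx
    linarith

private lemma aux_P1 : ∀ x : ℝ, 0 ≤ x →
    0 ≤ x * (Real.cosh x ^ 2 + Real.sinh x ^ 2) + 2 * x - 3 * (Real.sinh x * Real.cosh x) := by
  apply nonneg_of_deriv_nonneg'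
    (f' := fun x => 4 * x * Real.sinh x * Real.cosh x + 2 - 2 * (Real.cosh x ^ 2 + Real.sinh x ^ 2))
  · intro x
    have hs := Real.hasDerivAt_sinh x
    have hc := Real.hasDerivAt_cosh x
    have h := (((hasDerivAt_id' (x := x)).mul ((hc.pow 2).add (hs.pow 2))).add
      ((hasDerivAt_id' (x := x)).const_mul 2)).sub ((hs.mul hc).const_mul 3)
    convert h using 1 <;> try rfl
    norm_num
    try ring
  · simp
  · intro x hx
    exact aux_P2 x hx

/-- Key inequality: `2 sinh²k ≤ k sinh k cosh k + k²` for `k ≥ 0`. -/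
private lemma key_ineq : ∀ x : ℝ, 0 ≤ x →
    2 * Real.sinh x ^ 2 ≤ x * Real.sinh x * Real.cosh x + x ^ 2 := by
  have h : ∀ x : ℝ, 0 ≤ x →
      0 ≤ x * Real.sinh x * Real.cosh x + x ^ 2 - 2 * Real.sinh x ^ 2 := by
    apply nonneg_of_deriv_nonneg'
      (f' := fun x => x * (Real.cosh x ^ 2 + Real.sinh x ^ 2) + 2 * x
        - 3 * (Real.sinh x * Real.cosh x))
    · intro x
      have hs := Real.hasDerivAt_sinh x
      have hc := Real.hasDerivAt_cosh x
      have h := ((((hasDerivAt_id' (x := x)).mul hs).mul hc).add (hasDerivAt_pow 2 x)).sub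
        ((hs.pow 2).const_mul 2)
      convert h using 1 <;> try rfl
      norm_num
      try ring
    · simp
    · intro x hx
      exact aux_P1 x hx
  intro x hx
  linarith [h x hx]

/-- `sinh x ≤ x cosh x` for `x ≥ 0`. -/
private lemma sinh_le_mul_cosh : ∀ x : ℝ, 0 ≤ x → Real.sinh x ≤ x * Real.cosh x := by
  have h : ∀ x : ℝ, 0 ≤ x → 0 ≤ x * Real.cosh x - Real.sinh x := by
    apply nonneg_of_deriv_nonneg' (f' := fun x => x * Real.sinh x)
    · intro x
      have hs := Real.hasDerivAt_sinh x
      have hc := Real.hasDerivAt_cosh x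
      have h := (((hasDerivAt_id' (x := x)).mul hc)).sub hs
      convert h using 1 <;> try rfl
      norm_num
      try ring
    · simp
    · intro x hx
      exact mul_nonneg hx (Real.sinh_nonneg_iff.mpr hx)
  intro x hx
  linarith [h x hx]

/-- For `β ∈ (0,1/3)` and `c > 1`, there is a unique `k > 0` with `m_β(k) = c`. -/
theorem unique_positive_resonant_frequency (β : ℝ) (hβ0 : 0 < β) (hβ1 : β < 1/3)
    (c : ℝ) (hc : 1 < c)
    (m : ℝ → ℝ)
    (hm : ∀ k : ℝ, m k = if k = 0 then 1 else
      Real.sqrt ((1 + β * k^2) * Real.tanh k / k)) :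
    ∃! k : ℝ, 0 < k ∧ m k = c := by
  have hc0 : (0:ℝ) < c := lt_trans one_pos hc
  have hc2 : 1 < c ^ 2 := by nlinarith
  -- the auxiliary function B
  set B : ℝ → ℝ := fun k => (c ^ 2 * k * Real.cosh k - Real.sinh k) / (k ^ 2 * Real.sinh k)
    with hB
  -- key equivalence
  have hiff : ∀ k : ℝ, 0 < k → (m k = c ↔ B k = β) := by
    intro k hk
    have hk0 : k ≠ 0 := ne_of_gt hk
    have hs : 0 < Real.sinh k := Real.sinh_pos_iff.mpr hk
    have hch : 0 < Real.cosh k := Real.cosh_pos k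
    have hden : k ^ 2 * Real.sinh k ≠ 0 := by positivity
    have harg : 0 ≤ (1 + β * k ^ 2) * Real.tanh k / k := by
      have htp : 0 < Real.tanh k := by
        rw [Real.tanh_eq_sinh_div_cosh]; positivity
      have : 0 < 1 + β * k ^ 2 := by positivity
      positivity
    rw [hm k, if_neg hk0]
    constructor
    · intro h
      have hA : (1 + β * k ^ 2) * Real.tanh k / k = c ^ 2 := by
        have := Real.sq_sqrt harg
        rw [h] at this
        linarith [this]
      rw [Real.tanh_eq_sinh_div_cosh] at hA
      rw [hB]
      field_simp at hA ⊢
      nlinarith [hA]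
    · intro h
      have hA : (1 + β * k ^ 2) * Real.tanh k / k = c ^ 2 := by
        rw [hB] at h
        rw [Real.tanh_eq_sinh_div_cosh]
        field_simp at h ⊢
        nlinarith [h]
      rw [hA, Real.sqrt_sq hc0.le]
  -- B is strictly decreasing on (0, ∞)
  have hBderiv : ∀ x : ℝ, 0 < x → HasDerivAt B
      (((c ^ 2 * Real.cosh x + c ^ 2 * x * Real.sinh x - Real.cosh x) * (x ^ 2 * Real.sinh x)
        - (c ^ 2 * x * Real.cosh x - Real.sinh x) * (2 * x * Real.sinh x + x ^ 2 * Real.cosh x))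
        / (x ^ 2 * Real.sinh x) ^ 2) x := by
    intro x hx
    have hs := Real.hasDerivAt_sinh x
    have hch := Real.hasDerivAt_cosh x
    have hsp : 0 < Real.sinh x := Real.sinh_pos_iff.mpr hx
    have hden : x ^ 2 * Real.sinh x ≠ 0 := by positivity
    have hN : HasDerivAt (fun k => c ^ 2 * k * Real.cosh k - Real.sinh k)
        (c ^ 2 * Real.cosh x + c ^ 2 * x * Real.sinh x - Real.cosh x) x := by
      have h := (((hasDerivAt_id' (x := x)).const_mul (c ^ 2)).mul hch).sub hs
      convert h using 1 <;> try rfl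
      norm_num
      try ring
    have hD : HasDerivAt (fun k => k ^ 2 * Real.sinh k)
        (2 * x * Real.sinh x + x ^ 2 * Real.cosh x) x := by
      have h := (hasDerivAt_pow 2 x).mul hs
      convert h using 1 <;> try rfl
      norm_num
      try ring
    exact hN.div hD hden
  have hBanti : StrictAntiOn B (Ioi (0:ℝ)) := by
    apply strictAntiOn_of_deriv_neg (convex_Ioi 0)
    · intro x hx
      exact (hBderiv x hx).continuousAt.continuousWithinAt
    · intro x hx
      rw [interior_Ioi] at hx
      rw [(hBderiv x hx).deriv]
      have hsp : 0 < Real.sinh x := Real.sinh_pos_iff.mpr hx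
      have hcp : 0 < Real.cosh x := Real.cosh_pos x
      have hkey := key_ineq x hx.le
      have hpyth : Real.cosh x ^ 2 - Real.sinh x ^ 2 = 1 := Real.cosh_sq_sub_sinh_sq x
      apply div_neg_of_neg_of_pos
      · have hexp : (c ^ 2 * Real.cosh x + c ^ 2 * x * Real.sinh x - Real.cosh x) *
            (x ^ 2 * Real.sinh x)
            - (c ^ 2 * x * Real.cosh x - Real.sinh x) *
            (2 * x * Real.sinh x + x ^ 2 * Real.cosh x)
            = x * (2 * Real.sinh x ^ 2
              - c ^ 2 * (x * Real.sinh x * Real.cosh x + x ^ 2)) := by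
          linear_combination (-(c ^ 2 * x ^ 3)) * hpyth
        rw [hexp]
        apply mul_neg_of_pos_of_neg hx
        have h1 : x * Real.sinh x * Real.cosh x + x ^ 2
            < c ^ 2 * (x * Real.sinh x * Real.cosh x + x ^ 2) := by
          have hpos : 0 < x * Real.sinh x * Real.cosh x + x ^ 2 :=
            add_pos (mul_pos (mul_pos hx hsp) hcp) (pow_pos hx 2)
          nlinarith
        linarith
      · exact pow_pos (mul_pos (pow_pos hx 2) hsp) 2
  -- choose endpoints
  set k₁ : ℝ := Real.sqrt ((c ^ 2 - 1) / (2 * β)) with hk₁def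
  have hk₁pos : 0 < k₁ := Real.sqrt_pos.mpr (div_pos (by nlinarith) (by linarith))
  have hk₁sq : k₁ ^ 2 = (c ^ 2 - 1) / (2 * β) := Real.sq_sqrt (le_of_lt (div_pos (by nlinarith) (by linarith)))
  have hBk₁ : β < B k₁ := by
    have hs : 0 < Real.sinh k₁ := Real.sinh_pos_iff.mpr hk₁pos
    have hle : Real.sinh k₁ ≤ k₁ * Real.cosh k₁ := sinh_le_mul_cosh k₁ hk₁pos.le
    have hnum : (c ^ 2 - 1) * Real.sinh k₁ ≤ c ^ 2 * k₁ * Real.cosh k₁ - Real.sinh k₁ := by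
      nlinarith
    have h1 : (c ^ 2 - 1) / k₁ ^ 2 ≤ B k₁ := by
      rw [hB]
      rw [div_le_div_iff₀ (pow_pos hk₁pos 2) (mul_pos (pow_pos hk₁pos 2) hs)]
      nlinarith [pow_pos hk₁pos 2]
    have h2 : (c ^ 2 - 1) / k₁ ^ 2 = 2 * β := by
      have hne : c ^ 2 - 1 ≠ 0 := by nlinarith
      rw [hk₁sq, div_div_eq_mul_div, mul_comm, mul_div_assoc, div_self hne, mul_one]
    linarith
  set k₂ : ℝ := max (k₁ + 1) (4 * c ^ 2 / β) with hk₂def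
  have hk₂1 : 1 ≤ k₂ := le_trans (by linarith) (le_max_left _ _)
  have hk₂pos : 0 < k₂ := lt_of_lt_of_le one_pos hk₂1
  have hk₁k₂ : k₁ < k₂ := lt_of_lt_of_le (by linarith) (le_max_left _ _)
  have hBk₂ : B k₂ < β := by
    have hs : 0 < Real.sinh k₂ := Real.sinh_pos_iff.mpr hk₂pos
    have hcp : 0 < Real.cosh k₂ := Real.cosh_pos k₂
    -- cosh k₂ ≤ 2 sinh k₂ since e^{2k₂} ≥ 3
    have htanh : Real.cosh k₂ ≤ 2 * Real.sinh k₂ := by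
      rw [Real.cosh_eq, Real.sinh_eq]
      have h3 : 3 ≤ Real.exp 2 := by
        have := Real.add_one_le_exp (2:ℝ)
        linarith
      have h4 : Real.exp 2 ≤ Real.exp (2 * k₂) := Real.exp_le_exp.mpr (by linarith)
      have h5 : Real.exp (2 * k₂) = Real.exp k₂ * Real.exp k₂ := by
        rw [← Real.exp_add]; ring_nf
      have h6 : 3 * (Real.exp (-k₂) * Real.exp k₂) ≤ Real.exp k₂ * Real.exp k₂ := by
        rw [← Real.exp_add, neg_add_cancel, Real.exp_zero]
        linarith
      have h7 : 0 < Real.exp (-k₂) := Real.exp_pos _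
      nlinarith [Real.exp_pos k₂]
    have hub : B k₂ ≤ 2 * c ^ 2 / k₂ := by
      rw [hB]
      rw [div_le_div_iff₀ (mul_pos (pow_pos hk₂pos 2) hs) hk₂pos]
      have : c ^ 2 * k₂ * Real.cosh k₂ ≤ c ^ 2 * k₂ * (2 * Real.sinh k₂) := by
        have : 0 < c ^ 2 * k₂ := by positivity
        nlinarith
      nlinarith
    have h8 : 4 * c ^ 2 / β ≤ k₂ := le_max_right _ _
    have h9 : 2 * c ^ 2 / k₂ ≤ β / 2 := by
      rw [div_le_div_iff₀ hk₂pos (by norm_num)]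
      have : 4 * c ^ 2 ≤ k₂ * β := by
        rw [div_le_iff₀ hβ0] at h8
        linarith
      linarith
    linarith
  -- continuity of B on [k₁, k₂]
  have hBcont : ContinuousOn B (Icc k₁ k₂) := by
    intro x hx
    exact ((hBderiv x (lt_of_lt_of_le hk₁pos hx.1)).continuousAt).continuousWithinAt
  -- existence via IVT (B is continuous, B k₂ < β < B k₁)
  have hmem : β ∈ Icc (B k₂) (B k₁) := ⟨hBk₂.le, hBk₁.le⟩
  obtain ⟨k, hkmem, hkeq⟩ := intermediate_value_Icc' hk₁k₂.le hBcont hmem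
  have hkpos : 0 < k := lt_of_lt_of_le hk₁pos hkmem.1
  refine ⟨k, ⟨hkpos, (hiff k hkpos).mpr hkeq⟩, ?_⟩
  rintro k' ⟨hk'pos, hk'eq⟩
  have h1 : B k' = β := (hiff k' hk'pos).mp hk'eq
  have h2 : B k = β := hkeq
  exact hBanti.injOn (mem_Ioi.mpr hk'pos) (mem_Ioi.mpr hkpos) (h1.trans h2.symm)
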